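/- Let f ∈ ℝ[x₁,…,xₙ] be homogeneous of degree d, hyperbolic with respect to e ∈ ℝⁿ, with f(e) > 0. For any g and h in Int(f,e), the product g·h is nonnegative at every point of V_ℝ(f) = {x ∈ ℝⁿ : f(x) = 0}. -/

import Mathlib

open Filter Topology

/-- The restriction of a multivariate polynomial to the line `t ↦ t•e + a`,
as a univariate polynomial in `t`. -/
noncomputable def lineRestrict {n : ℕ} (f : MvPolynomial (Fin n) ℝ) (e a : Fin n → ℝ) :
    Polynomial ℝ :=
  MvPolynomial.aeval (fun i => Polynomial.C (a i) + Polynomial.C (e i) * Polynomial.X) f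

/-- A univariate real polynomial has only real zeros: every complex root is real. -/
def RealRooted (p : Polynomial ℝ) : Prop :=
  ∀ z : ℂ, Polynomial.aeval z p = 0 → z.im = 0

/-- `f` is hyperbolic with respect to `e`: `f(e) ≠ 0` and for every `a`,
all roots of `t ↦ f(t•e + a)` are real. -/
def IsHyperbolic {n : ℕ} (f : MvPolynomial (Fin n) ℝ) (e : Fin n → ℝ) : Prop :=
  MvPolynomial.eval e f ≠ 0 ∧ ∀ a : Fin n → ℝ, RealRooted (lineRestrict f e a)

/-- The roots of a univariate real polynomial, sorted increasingly (with multiplicity). -/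
noncomputable def sortedRoots (p : Polynomial ℝ) : List ℝ :=
  p.roots.sort (· ≤ ·)

/-- `q` interlaces `p` (univariate): both have only real roots, `deg q = deg p − 1`,
and with roots `α₁ ≤ … ≤ α_d` of `p`, `β₁ ≤ … ≤ β_{d-1}` of `q`,
one has `α_i ≤ β_i ≤ α_{i+1}`. -/
def InterlacesU (q p : Polynomial ℝ) : Prop :=
  RealRooted p ∧ RealRooted q ∧ q.natDegree + 1 = p.natDegree ∧
    ∀ i : ℕ, i + 1 < (sortedRoots p).length →
      (sortedRoots p).getD i 0 ≤ (sortedRoots q).getD i 0 ∧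
        (sortedRoots q).getD i 0 ≤ (sortedRoots p).getD (i + 1) 0

/-- `q` strictly interlaces `p` (univariate): all interlacing inequalities are strict. -/
def StrictInterlacesU (q p : Polynomial ℝ) : Prop :=
  RealRooted p ∧ RealRooted q ∧ q.natDegree + 1 = p.natDegree ∧
    ∀ i : ℕ, i + 1 < (sortedRoots p).length →
      (sortedRoots p).getD i 0 < (sortedRoots q).getD i 0 ∧
        (sortedRoots q).getD i 0 < (sortedRoots p).getD (i + 1) 0

/-- `g` interlaces `f` with respect to `e`: `g(t•e+a)` interlaces `f(t•e+a)` for every `a`. -/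
def Interlaces {n : ℕ} (g f : MvPolynomial (Fin n) ℝ) (e : Fin n → ℝ) : Prop :=
  ∀ a : Fin n → ℝ, InterlacesU (lineRestrict g e a) (lineRestrict f e a)

/-- `g` strictly interlaces `f` with respect to `e`: `g(t•e+a)` strictly interlaces
`f(t•e+a)` for all `a` in a nonempty Zariski-open subset of `ℝⁿ`. -/
def StrictInterlaces {n : ℕ} (g f : MvPolynomial (Fin n) ℝ) (e : Fin n → ℝ) : Prop :=
  ∃ p : MvPolynomial (Fin n) ℝ, p ≠ 0 ∧ ∀ a : Fin n → ℝ, MvPolynomial.eval a p ≠ 0 →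
    StrictInterlacesU (lineRestrict g e a) (lineRestrict f e a)

/-- The hyperbolicity cone `C(f,e)`: the connected component of `e` in `ℝⁿ \ V_ℝ(f)`. -/
def hypCone {n : ℕ} (f : MvPolynomial (Fin n) ℝ) (e : Fin n → ℝ) : Set (Fin n → ℝ) :=
  connectedComponentIn {x | MvPolynomial.eval x f ≠ 0} e

/-- The directional derivative `D_e f = Σᵢ eᵢ ∂f/∂xᵢ`. -/
noncomputable def Dd {n : ℕ} (e : Fin n → ℝ) (f : MvPolynomial (Fin n) ℝ) :
    MvPolynomial (Fin n) ℝ :=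
  ∑ i, MvPolynomial.C (e i) * MvPolynomial.pderiv i f

/-- `Int(f,e)`: homogeneous polynomials of degree `d−1` interlacing `f` (of degree `d`)
with respect to `e` and positive at `e`. -/
def IntCone {n : ℕ} (f : MvPolynomial (Fin n) ℝ) (e : Fin n → ℝ) (d : ℕ) :
    Set (MvPolynomial (Fin n) ℝ) :=
  {g | g.IsHomogeneous (d - 1) ∧ Interlaces g f e ∧ 0 < MvPolynomial.eval e g}

/-- The Wronskian polynomial `Δ_{e,a} f = D_e f · D_a f − f · D_e D_a f`. -/
noncomputable def Wron {n : ℕ} (e a : Fin n → ℝ) (f : MvPolynomial (Fin n) ℝ) :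
    MvPolynomial (Fin n) ℝ :=
  Dd e f * Dd a f - f * Dd e (Dd a f)

/-- A polynomial is a sum of squares of polynomials. -/
def IsSOS {n : ℕ} (p : MvPolynomial (Fin n) ℝ) : Prop :=
  ∃ (k : ℕ) (g : Fin k → MvPolynomial (Fin n) ℝ), p = ∑ i, (g i) ^ 2

/-- The matrix pencil `M(x) = x₁M₁ + … + xₙMₙ` as a matrix of polynomials. -/
noncomputable def pencil {n d : ℕ} (M : Fin n → Matrix (Fin d) (Fin d) ℝ) :
    Matrix (Fin d) (Fin d) (MvPolynomial (Fin n) ℝ) :=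
  Matrix.of fun i j => ∑ k, MvPolynomial.C (M k i j) * MvPolynomial.X k

/-- `Δ_{ij} f = (∂f/∂xᵢ)(∂f/∂xⱼ) − f·(∂²f/∂xᵢ∂xⱼ)`. -/
noncomputable def Dij {n : ℕ} (i j : Fin n) (f : MvPolynomial (Fin n) ℝ) :
    MvPolynomial (Fin n) ℝ :=
  MvPolynomial.pderiv i f * MvPolynomial.pderiv j f -
    f * MvPolynomial.pderiv i (MvPolynomial.pderiv j f)

/-- `f` is stable: `f(μ) ≠ 0` whenever every coordinate of `μ` has positive imaginary part. -/
def IsStable {n : ℕ} (f : MvPolynomial (Fin n) ℝ) : Prop :=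
  ∀ μ : Fin n → ℂ, (∀ i, 0 < (μ i).im) → MvPolynomial.aeval μ f ≠ 0

/-!
Restrict everything to the line `t ↦ x + t • e` through a real zero `x` of `f`. The restrictions
of `g` and `h` have leading coefficients `g(e), h(e) > 0`, and their `i`-th roots `βᵢ`, `γᵢ` both
lie in the `i`-th gap `[αᵢ, αᵢ₊₁]` between consecutive roots of `f(x + t • e)`. As `0` is one of
the `αⱼ`, no gap straddles `0`, so `βᵢ γᵢ ≥ 0` and `g(x) h(x) = g(e) h(e) ∏ᵢ βᵢ γᵢ ≥ 0`.
-/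

open Polynomial

theorem Polynomial.coeff_prod_sum_of_natDegree_le {ι R : Type*} [CommSemiring R] (s : Finset ι)
    (f : ι → R[X]) (n : ι → ℕ) (h : ∀ i ∈ s, (f i).natDegree ≤ n i) :
    (∏ i ∈ s, f i).coeff (∑ i ∈ s, n i) = ∏ i ∈ s, (f i).coeff (n i) := by
  induction s using Finset.cons_induction with
  | empty => simp
  | cons a s ha ih =>
    rw [Finset.forall_mem_cons] at h
    rw [Finset.prod_cons, Finset.sum_cons, Finset.prod_cons,
      coeff_mul_add_eq_of_natDegree_le h.1
        ((natDegree_prod_le s f).trans (Finset.sum_le_sum h.2)), ih h.2]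

theorem Polynomial.natDegree_C_add_C_mul_X_le {R : Type*} [Semiring R] (a b : R) :
    (C a + C b * X).natDegree ≤ 1 := by
  rw [add_comm]
  exact natDegree_linear_le

theorem List.prod_map_eq_prod_range_getD {α M : Type*} [CommMonoid M] (l : List α) (f : α → M)
    (d : α) : (l.map f).prod = ∏ i ∈ Finset.range l.length, f (l.getD i d) := by
  induction l with
  | nil => simp
  | cons a l ih => simp [Finset.prod_range_succ', ih, mul_comm]

theorem List.Pairwise.le_getD_or_getD_succ_le {α : Type*} [LinearOrder α] {l : List α}
    (hl : l.Pairwise (· ≤ ·)) {x : α} (hx : x ∈ l) {i : ℕ} (hi : i + 1 < l.length) (d : α) :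
    x ≤ l.getD i d ∨ l.getD (i + 1) d ≤ x := by
  obtain ⟨j, hj, rfl⟩ := List.mem_iff_getElem.mp hx
  have hmono := (List.sortedLE_iff_pairwise.mpr hl).monotone_get
  rw [List.getD_eq_getElem _ _ (by omega), List.getD_eq_getElem _ _ hi]
  rcases le_or_gt j i with hji | hij
  · exact .inl (hmono (a := ⟨j, hj⟩) (b := ⟨i, by omega⟩) hji)
  · exact .inr (hmono (a := ⟨i + 1, hi⟩) (b := ⟨j, hj⟩) hij)

theorem sub_mul_sub_nonneg_of_mem_Icc {α : Type*} [CommRing α] [LinearOrder α]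
    [IsStrictOrderedRing α] {a b t x y : α} (ht : t ≤ a ∨ b ≤ t)
    (hx : x ∈ Set.Icc a b) (hy : y ∈ Set.Icc a b) : 0 ≤ (t - x) * (t - y) := by
  rcases ht with ht | ht
  · exact mul_nonneg_of_nonpos_of_nonpos (sub_nonpos.2 (ht.trans hx.1))
      (sub_nonpos.2 (ht.trans hy.1))
  · exact mul_nonneg (sub_nonneg.2 (hx.2.trans ht)) (sub_nonneg.2 (hy.2.trans ht))

theorem RealRooted.splits {p : ℝ[X]} (hp : RealRooted p) : p.Splits := by
  refine Splits.of_splits_map_of_injective (algebraMap ℝ ℂ).injective (IsAlgClosed.splits _)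
    fun z hz => ⟨z.re, Complex.ext (by simp) ?_⟩
  have := hp z (by rw [aeval_def, eval₂_eq_eval_map]; exact (mem_roots'.mp hz).2)
  simp [this]

theorem Polynomial.Splits.eval_eq_leadingCoeff_mul_prod_sortedRoots {p : ℝ[X]} (hp : p.Splits)
    (t : ℝ) : p.eval t =
      p.leadingCoeff * ∏ i ∈ Finset.range p.natDegree, (t - (sortedRoots p).getD i 0) := by
  have hroots : p.roots = ↑(sortedRoots p) := (Multiset.sort_eq _ _).symm
  rw [hp.eval_eq_prod_roots, hp.natDegree_eq_card_roots, hroots, Multiset.map_coe,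
    Multiset.prod_coe, Multiset.coe_card, List.prod_map_eq_prod_range_getD _ _ 0]

theorem InterlacesU.mul_eval_nonneg {p q r : ℝ[X]} (hq : InterlacesU q p) (hr : InterlacesU r p)
    {t : ℝ} (ht : p.IsRoot t) (hlc : 0 ≤ q.leadingCoeff * r.leadingCoeff) :
    0 ≤ q.eval t * r.eval t := by
  obtain ⟨hpR, hqR, hqp, hβ⟩ := hq
  obtain ⟨-, hrR, hrp, hγ⟩ := hr
  have hp0 : p ≠ 0 := by rintro rfl; simp at hqp
  have hlen : (sortedRoots p).length = q.natDegree + 1 := by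
    rw [sortedRoots, Multiset.length_sort, ← hpR.splits.natDegree_eq_card_roots, hqp]
  have htmem : t ∈ sortedRoots p := by
    rw [sortedRoots, Multiset.mem_sort]
    exact mem_roots'.mpr ⟨hp0, ht⟩
  have hfactor : ∀ i ∈ Finset.range q.natDegree,
      0 ≤ (t - (sortedRoots q).getD i 0) * (t - (sortedRoots r).getD i 0) := by
    intro i hi
    have hi : i + 1 < (sortedRoots p).length := by rw [Finset.mem_range] at hi; omega
    exact sub_mul_sub_nonneg_of_mem_Icc
      ((Multiset.pairwise_sort _ _).le_getD_or_getD_succ_le htmem hi 0) (hβ i hi) (hγ i hi)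
  calc 0 ≤ q.leadingCoeff * r.leadingCoeff * ∏ i ∈ Finset.range q.natDegree,
        (t - (sortedRoots q).getD i 0) * (t - (sortedRoots r).getD i 0) :=
        mul_nonneg hlc (Finset.prod_nonneg hfactor)
    _ = q.eval t * r.eval t := by
      rw [hqR.splits.eval_eq_leadingCoeff_mul_prod_sortedRoots,
        hrR.splits.eval_eq_leadingCoeff_mul_prod_sortedRoots,
        show r.natDegree = q.natDegree by omega, Finset.prod_mul_distrib]
      ring

theorem eval_lineRestrict {n : ℕ} (g : MvPolynomial (Fin n) ℝ) (e a : Fin n → ℝ) (t : ℝ) :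
    (lineRestrict g e a).eval t = MvPolynomial.eval (fun i => a i + e i * t) g := by
  induction g using MvPolynomial.induction_on with
  | C c => simp [lineRestrict]
  | add p q hp hq => simp_all [lineRestrict]
  | mul_X p i hp => simp_all [lineRestrict]

section lineRestrict

variable {n k : ℕ} {g : MvPolynomial (Fin n) ℝ}

theorem MvPolynomial.IsHomogeneous.natDegree_lineRestrict_le (hg : g.IsHomogeneous k)
    (e a : Fin n → ℝ) : (lineRestrict g e a).natDegree ≤ k := by
  simpa [lineRestrict] using MvPolynomial.aeval_natDegree_le g hg.totalDegree_le _
    fun i => natDegree_C_add_C_mul_X_le (a i) (e i)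

theorem MvPolynomial.IsHomogeneous.coeff_lineRestrict (hg : g.IsHomogeneous k) (e a : Fin n → ℝ) :
    (lineRestrict g e a).coeff k = MvPolynomial.eval e g := by
  rw [lineRestrict, g.as_sum, map_sum, finsetSum_coeff, map_sum]
  refine Finset.sum_congr rfl fun m hm => ?_
  rw [hg.degree_eq_sum_deg_support hm, MvPolynomial.aeval_monomial, MvPolynomial.eval_monomial,
    ← Polynomial.C_eq_algebraMap, Polynomial.coeff_C_mul, Finsupp.prod, Finsupp.prod,
    coeff_prod_sum_of_natDegree_le _ _ m fun i _ =>
      (natDegree_pow_le_of_le _ (natDegree_C_add_C_mul_X_le _ _)).trans_eq (mul_one _)]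
  congr 1
  refine Finset.prod_congr rfl fun i _ => ?_
  simpa using coeff_pow_of_natDegree_le (m := m i) (natDegree_C_add_C_mul_X_le (a i) (e i))

theorem MvPolynomial.IsHomogeneous.leadingCoeff_lineRestrict (hg : g.IsHomogeneous k)
    {e : Fin n → ℝ} (he : MvPolynomial.eval e g ≠ 0) (a : Fin n → ℝ) :
    (lineRestrict g e a).leadingCoeff = MvPolynomial.eval e g := by
  have hdeg : (lineRestrict g e a).natDegree = k :=
    (hg.natDegree_lineRestrict_le e a).antisymm
      (le_natDegree_of_ne_zero (by rwa [hg.coeff_lineRestrict]))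
  rw [leadingCoeff, hdeg, hg.coeff_lineRestrict]

end lineRestrict

theorem mul_interlacers_nonneg_general {n d : ℕ} (f g h : MvPolynomial (Fin n) ℝ) (e : Fin n → ℝ)
    (hg : g ∈ IntCone f e d) (hh : h ∈ IntCone f e d) :
    ∀ x : Fin n → ℝ, MvPolynomial.eval x f = 0 →
      0 ≤ MvPolynomial.eval x g * MvPolynomial.eval x h := by
  intro x hx
  obtain ⟨hg_hom, hg_int, hg_pos⟩ := hg
  obtain ⟨hh_hom, hh_int, hh_pos⟩ := hh
  have hroot : (lineRestrict f e x).IsRoot 0 := by simpa [IsRoot, eval_lineRestrict] using hx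
  have hlc : 0 ≤ (lineRestrict g e x).leadingCoeff * (lineRestrict h e x).leadingCoeff := by
    rw [hg_hom.leadingCoeff_lineRestrict hg_pos.ne', hh_hom.leadingCoeff_lineRestrict hh_pos.ne']
    positivity
  simpa [eval_lineRestrict] using (hg_int x).mul_eval_nonneg (hh_int x) hroot hlc

/-- Lemma 2.4: the product of two interlacers is nonnegative on the real variety of `f`. -/
theorem mul_interlacers_nonneg {n d : ℕ} (f g h : MvPolynomial (Fin n) ℝ) (e : Fin n → ℝ)
    (hf : f.IsHomogeneous d) (hyp : IsHyperbolic f e) (hfe : 0 < MvPolynomial.eval e f)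
    (hg : g ∈ IntCone f e d) (hh : h ∈ IntCone f e d) :
    ∀ x : Fin n → ℝ, MvPolynomial.eval x f = 0 →
      0 ≤ MvPolynomial.eval x g * MvPolynomial.eval x h :=
  mul_interlacers_nonneg_general f g h e hg hh
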